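/- Let S be a commutative semiring and B an S-bisemialgebra which is S-cogenerated as an S-semimodule (the functionals in B* = Hom_S(B, S) separate points of B). Then the set ∫^l of left integrals on B (those t ∈ B* with Σ b_1·t(b_2) = t(b)·1_B for all b ∈ B) is a two-sided ideal of the convolution semiring B*: it is an S-subsemimodule of B*, and for every f ∈ B* and every t ∈ ∫^l, both f * t and t * f lie in ∫^l. -/
import Mathlib


/-!
STATEMENT 11: Let `S` be a commutative semiring and `B` an `S`-bisemialgebra
which is `S`-cogenerated as an `S`-semimodule (the functionals in `B*`
separate points of `B`).  Then the set `∫ˡ` of left integrals on `B` is a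
two-sided ideal of the convolution semiring `B*`: it is an `S`-subsemimodule
of `B*` (contains `0`, is closed under `+` and under scalar multiplication),
and for every `f ∈ B*` and every left integral `t`, both `f * t` and `t * f`
are again left integrals.
-/

open TensorProduct

variable (S : Type*) [CommSemiring S] (B : Type*) [Semiring B] [Bialgebra S B]

/-- The convolution product on `B* = Hom_S(B,S)`:
`(f * g) b = Σ f b₁ · g b₂`. -/
noncomputable def convProd (f g : B →ₗ[S] S) : B →ₗ[S] S :=
  LinearMap.mul' S S ∘ₗ TensorProduct.map f g ∘ₗ Coalgebra.comul

/-- `t : B*` is a left integral on `B`: `Σ b₁ · t b₂ = t b • 1` for all `b`. -/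
def IsLeftIntegralOn (t : B →ₗ[S] S) : Prop :=
  ∀ b : B, (TensorProduct.rid S B)
    (LinearMap.lTensor B t (Coalgebra.comul b)) = t b • (1 : B)

lemma aux2 (f t : B →ₗ[S] S) :
    LinearMap.mul' S S ∘ₗ TensorProduct.map f t
      = f ∘ₗ (TensorProduct.rid S B).toLinearMap ∘ₗ LinearMap.lTensor B t := by
  apply TensorProduct.ext'
  intro a c
  simp [mul_comm]

lemma aux1 (g h : B →ₗ[S] S) :
    (TensorProduct.rid S B).toLinearMap
        ∘ₗ LinearMap.lTensor B (LinearMap.mul' S S ∘ₗ TensorProduct.map g h)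
        ∘ₗ (TensorProduct.assoc S B B B).toLinearMap
      = (TensorProduct.rid S B).toLinearMap
        ∘ₗ TensorProduct.map ((TensorProduct.rid S B).toLinearMap ∘ₗ LinearMap.lTensor B g) h := by
  apply TensorProduct.ext_threefold
  intro a c d
  simp [smul_smul, mul_comm]

lemma aux3 (t f : B →ₗ[S] S) :
    (TensorProduct.rid S B).toLinearMap
        ∘ₗ TensorProduct.map (LinearMap.toSpanSingleton S B 1 ∘ₗ t) f
      = LinearMap.toSpanSingleton S B 1 ∘ₗ LinearMap.mul' S S ∘ₗ TensorProduct.map t f := by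
  apply TensorProduct.ext'
  intro a c
  simp [smul_smul, mul_comm]

lemma smul_integral (s : S) (t : B →ₗ[S] S) (ht : IsLeftIntegralOn S B t) :
    IsLeftIntegralOn S B (s • t) := by
  intro b
  simp only [LinearMap.lTensor_smul, LinearMap.smul_apply, map_smul, ht b,
    LinearMap.smul_apply, smul_smul, smul_eq_mul]

lemma mul_integral (f t : B →ₗ[S] S) (ht : IsLeftIntegralOn S B t) :
    IsLeftIntegralOn S B (convProd S B t f) := by
  intro b
  have hmap : (TensorProduct.rid S B).toLinearMap ∘ₗ LinearMap.lTensor B t ∘ₗ Coalgebra.comul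
      = LinearMap.toSpanSingleton S B 1 ∘ₗ t := by
    ext c; simpa using ht c
  calc (TensorProduct.rid S B) (LinearMap.lTensor B (convProd S B t f) (Coalgebra.comul b))
      = (TensorProduct.rid S B) (LinearMap.lTensor B
          (LinearMap.mul' S S ∘ₗ TensorProduct.map t f)
          ((TensorProduct.assoc S B B B)
            (LinearMap.rTensor B Coalgebra.comul (Coalgebra.comul b)))) := by
        rw [Coalgebra.coassoc_apply]
        simp only [convProd, ← LinearMap.comp_assoc, LinearMap.lTensor_comp,
          LinearMap.comp_apply]
    _ = (TensorProduct.rid S B) (TensorProduct.map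
          ((TensorProduct.rid S B).toLinearMap ∘ₗ LinearMap.lTensor B t) f
          (LinearMap.rTensor B Coalgebra.comul (Coalgebra.comul b))) := by
        have := LinearMap.congr_fun (aux1 S B t f)
          (LinearMap.rTensor B Coalgebra.comul (Coalgebra.comul b))
        simpa using this
    _ = (TensorProduct.rid S B) (TensorProduct.map
          (LinearMap.toSpanSingleton S B 1 ∘ₗ t) f (Coalgebra.comul b)) := by
        have h : TensorProduct.map ((TensorProduct.rid S B).toLinearMap ∘ₗ LinearMap.lTensor B t) f
            (LinearMap.rTensor B Coalgebra.comul (Coalgebra.comul b))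
            = TensorProduct.map (((TensorProduct.rid S B).toLinearMap ∘ₗ LinearMap.lTensor B t)
                ∘ₗ Coalgebra.comul) f (Coalgebra.comul b) := by
          rw [← LinearMap.comp_apply, LinearMap.rTensor, ← TensorProduct.map_comp,
            LinearMap.comp_id]
        rw [h, LinearMap.comp_assoc, hmap]
    _ = (convProd S B t f) b • (1 : B) := by
        have := LinearMap.congr_fun (aux3 S B t f) (Coalgebra.comul b)
        simpa [convProd] using this

theorem left_integrals_ideal_of_cogenerated
    (hcog : ∀ b b' : B, (∀ f : B →ₗ[S] S, f b = f b') → b = b') :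
    IsLeftIntegralOn S B (0 : B →ₗ[S] S) ∧
    (∀ t t' : B →ₗ[S] S, IsLeftIntegralOn S B t → IsLeftIntegralOn S B t' →
      IsLeftIntegralOn S B (t + t')) ∧
    (∀ (s : S) (t : B →ₗ[S] S), IsLeftIntegralOn S B t →
      IsLeftIntegralOn S B (s • t)) ∧
    (∀ f t : B →ₗ[S] S, IsLeftIntegralOn S B t →
      IsLeftIntegralOn S B (convProd S B f t)) ∧
    (∀ f t : B →ₗ[S] S, IsLeftIntegralOn S B t →
      IsLeftIntegralOn S B (convProd S B t f)) := by
  refine ⟨?_, ?_, ?_, ?_, ?_⟩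
  · intro b
    simp [LinearMap.lTensor_zero]
  · intro t t' ht ht' b
    simp [LinearMap.lTensor_add, ht b, ht' b, add_smul]
  · exact smul_integral S B
  · intro f t ht
    have key : convProd S B f t = f 1 • t := by
      ext b
      have := LinearMap.congr_fun (aux2 S B f t) (Coalgebra.comul b)
      simp only [convProd, LinearMap.comp_apply, LinearEquiv.coe_coe] at this ⊢
      rw [this, ht b]
      simp [mul_comm]
    rw [key]
    exact smul_integral S B _ t ht
  · exact mul_integral S B
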